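/- Let M ≥ 2 and let ψ_{k,m} ∈ ℂ^M, k = 1,…,4, m = 1,…,M−1, be defined by ψ_{1,m} = a e₁ + b e_{m+1}, ψ_{2,m} = b e₁ + a e_{m+1}, ψ_{3,m} = a e₁ − b e_{m+1}, ψ_{4,m} = −b e₁ + a e_{m+1}, with a = √((1−1/√3)/2) and b = e^{i5π/4}√((1+1/√3)/2). Then for any z, z' ∈ ℂ^M with z₁ ≠ 0 and z'₁ ≠ 0, if |⟨z, ψ_{k,m}⟩|² = |⟨z', ψ_{k,m}⟩|² for all k, m, then there exists θ ∈ ℝ with z' = e^{iθ} z. -/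

import Mathlib

/-! Put `u = z₁`, `v = z_m` and `w = conj u * v`. Since `a` is real, the sum and the difference
of the measurements with `ψ_{1,m}` and `ψ_{3,m}` are `2 (a² |u|² + |b|² |v|²)` and
`4 a Re (conj b * w)`; those with `ψ_{2,m}` and `ψ_{4,m}` are `2 (|b|² |u|² + a² |v|²)` and
`4 a Re (b * w)`. As `a² ≠ |b|²`, the first pair determines `|u|²`; as `b² = i |b|²` is not real,
`b` and `conj b` are linearly independent over `ℝ`, so the second pair determines `w`. Hence
`conj z₁ * z = conj z'₁ * z'` coordinatewise, which forces `z' = (z'₁ / z₁) z` with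
`|z'₁ / z₁| = 1`. -/

open Complex

/-- The constant `a = √((1 − 1/√3)/2)`. -/
noncomputable def aConst : ℂ := (Real.sqrt ((1 - 1 / Real.sqrt 3) / 2) : ℝ)

/-- The constant `b = e^{i5π/4}·√((1 + 1/√3)/2)`. -/
noncomputable def bConst : ℂ :=
  Complex.exp (Complex.I * (5 * Real.pi / 4)) * (Real.sqrt ((1 + 1 / Real.sqrt 3) / 2) : ℝ)

/-- The standard Hermitian inner product `⟨z, v⟩ = Σ_i z_i conj(v_i)` on `ℂ^M`. -/
noncomputable def innM {M : ℕ} (z v : Fin M → ℂ) : ℂ := ∑ i, z i * star (v i)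

/-- The canonical basis vector `e_m` of `ℂ^M`. -/
def eVec {M : ℕ} (m : Fin M) : Fin M → ℂ := fun i => if i = m then 1 else 0

/-- The measurement vectors `ψ_{1,m} = a h₁₃ + b e_m`, `ψ_{2,m} = b h₁₃ + a e_m`,
`ψ_{3,m} = a h₁₃ − b e_m`, `ψ_{4,m} = −b h₁₃ + a e_m` in `ℂ^M` (here `m` ranges over the
nonzero coordinates, corresponding to `e_{m+1}`, `m = 1,…,M−1`, of the paper). -/
noncomputable def psiVec {M : ℕ} [NeZero M] (k : Fin 4) (m : Fin M) : Fin M → ℂ :=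
  ![(fun i => aConst * eVec 0 i + bConst * eVec m i),
    (fun i => bConst * eVec 0 i + aConst * eVec m i),
    (fun i => aConst * eVec 0 i - bConst * eVec m i),
    (fun i => -bConst * eVec 0 i + aConst * eVec m i)] k

open ComplexConjugate

namespace Complex

variable {x y x' y' : ℂ}

theorem normSq_add_normSq_eq_of_normSq_add_sub_eq (hadd : normSq (x + y) = normSq (x' + y'))
    (hsub : normSq (x - y) = normSq (x' - y')) :
    normSq x + normSq y = normSq x' + normSq y' := by
  rw [normSq_add, normSq_add] at hadd
  rw [normSq_sub, normSq_sub] at hsub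
  linarith

theorem re_mul_conj_eq_of_normSq_add_sub_eq (hadd : normSq (x + y) = normSq (x' + y'))
    (hsub : normSq (x - y) = normSq (x' - y')) :
    (x * conj y).re = (x' * conj y').re := by
  rw [normSq_add, normSq_add] at hadd
  rw [normSq_sub, normSq_sub] at hsub
  linarith

theorem eq_of_re_mul_eq_of_re_conj_mul_eq {b w w' : ℂ} (hb : (b ^ 2).im ≠ 0)
    (h : (b * w).re = (b * w').re) (hc : (conj b * w).re = (conj b * w').re) : w = w' := by
  simp only [mul_re, conj_re, conj_im, pow_two, mul_im] at h hc hb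
  have hre : b.re ≠ 0 := fun h0 => hb (by rw [h0]; ring)
  have him : b.im ≠ 0 := fun h0 => hb (by rw [h0]; ring)
  apply Complex.ext
  · exact mul_left_cancel₀ hre (by linarith)
  · exact mul_left_cancel₀ him (by linarith)

end Complex

section Measurements

variable {a : ℝ} {b u v u' v' : ℂ}

theorem normSq_eq_of_measurements (ha : a ≠ 0) (hab : a ^ 2 ≠ normSq b)
    (h₁ : normSq (a * u + conj b * v) = normSq (a * u' + conj b * v'))
    (h₂ : normSq (a * v + conj b * u) = normSq (a * v' + conj b * u'))
    (h₃ : normSq (a * u - conj b * v) = normSq (a * u' - conj b * v'))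
    (h₄ : normSq (a * v - conj b * u) = normSq (a * v' - conj b * u')) :
    normSq u = normSq u' := by
  have h₁₃ := normSq_add_normSq_eq_of_normSq_add_sub_eq h₁ h₃
  have h₂₄ := normSq_add_normSq_eq_of_normSq_add_sub_eq h₂ h₄
  simp only [normSq_mul, normSq_conj, normSq_ofReal] at h₁₃ h₂₄
  have hdet : (a ^ 2) ^ 2 - normSq b ^ 2 ≠ 0 := by
    have : 0 < a ^ 2 + normSq b := add_pos_of_pos_of_nonneg (by positivity) (normSq_nonneg b)
    rw [sq_sub_sq]
    exact mul_ne_zero this.ne' (sub_ne_zero.2 hab)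
  exact mul_left_cancel₀ hdet (by linear_combination a ^ 2 * h₁₃ - normSq b * h₂₄)

theorem conj_mul_eq_of_measurements (ha : a ≠ 0) (hb : (b ^ 2).im ≠ 0)
    (h₁ : normSq (a * u + conj b * v) = normSq (a * u' + conj b * v'))
    (h₂ : normSq (a * v + conj b * u) = normSq (a * v' + conj b * u'))
    (h₃ : normSq (a * u - conj b * v) = normSq (a * u' - conj b * v'))
    (h₄ : normSq (a * v - conj b * u) = normSq (a * v' - conj b * u')) :
    conj u * v = conj u' * v' := by
  have h₁₃ := re_mul_conj_eq_of_normSq_add_sub_eq h₁ h₃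
  have h₂₄ := re_mul_conj_eq_of_normSq_add_sub_eq h₂ h₄
  have expand₁₃ : ∀ u v : ℂ, (a * u * conj (conj b * v)).re = a * (conj b * (conj u * v)).re := by
    intro u v; simp only [mul_re, mul_im, conj_re, conj_im, ofReal_re, ofReal_im]; ring
  have expand₂₄ : ∀ u v : ℂ, (a * v * conj (conj b * u)).re = a * (b * (conj u * v)).re := by
    intro u v; simp only [mul_re, mul_im, conj_re, conj_im, ofReal_re, ofReal_im]; ring
  rw [expand₁₃, expand₁₃] at h₁₃
  rw [expand₂₄, expand₂₄] at h₂₄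
  exact eq_of_re_mul_eq_of_re_conj_mul_eq hb (mul_left_cancel₀ ha h₂₄) (mul_left_cancel₀ ha h₁₃)

end Measurements

theorem innM_mul_eVec_add_mul_eVec {M : ℕ} (z : Fin M → ℂ) (α β : ℂ) (p q : Fin M) :
    innM z (fun i => α * eVec p i + β * eVec q i) = conj α * z p + conj β * z q := by
  simp [innM, eVec, mul_add, Finset.sum_add_distrib, apply_ite (starRingEnd ℂ), mul_comm]

theorem exists_phase_of_conj_mul_eq {ι : Type*} (i₀ : ι) {z z' : ι → ℂ} (hz : z i₀ ≠ 0)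
    (h : ∀ i, conj (z i₀) * z i = conj (z' i₀) * z' i) :
    ∃ θ : ℝ, z' = fun i => exp (I * θ) * z i := by
  set c := z' i₀ / z i₀
  have hnorm : normSq (z i₀) = normSq (z' i₀) := by
    exact_mod_cast (by simpa only [mul_comm (conj _), mul_conj] using h i₀ :
      (normSq (z i₀) : ℂ) = normSq (z' i₀))
  have hc : ‖c‖ = 1 := by
    rw [norm_div, div_eq_one_iff_eq (norm_ne_zero_iff.2 hz)]
    rw [normSq_eq_norm_sq, normSq_eq_norm_sq] at hnorm
    exact ((sq_eq_sq₀ (norm_nonneg _) (norm_nonneg _)).1 hnorm).symm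
  have hexp : exp (I * c.arg) = c := by
    simpa [hc, mul_comm I] using norm_mul_exp_arg_mul_I c
  refine ⟨c.arg, funext fun i => ?_⟩
  have hcancel : conj (z i₀) * (z' i₀ * z i) = conj (z i₀) * (z i₀ * z' i) :=
    calc conj (z i₀) * (z' i₀ * z i) = z' i₀ * conj (z' i₀) * z' i := by
          linear_combination z' i₀ * h i
      _ = conj (z i₀) * (z i₀ * z' i) := by rw [mul_conj, ← hnorm, ← mul_conj]; ring
  rw [hexp, div_mul_eq_mul_div, eq_div_iff hz]
  linear_combination -mul_left_cancel₀ ((map_ne_zero _).2 hz) hcancel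

open Real

theorem one_div_sqrt_three_lt_one : 1 / √3 < 1 := by
  rw [div_lt_one (by positivity), Real.lt_sqrt zero_le_one]
  norm_num

theorem conj_aConst : conj aConst = aConst.re := by
  simp [aConst]

theorem aConst_re_sq : aConst.re ^ 2 = (1 - 1 / √3) / 2 := by
  have := one_div_sqrt_three_lt_one
  simp only [aConst, ofReal_re]
  exact Real.sq_sqrt (by linarith)

theorem aConst_re_ne_zero : aConst.re ≠ 0 := by
  have := one_div_sqrt_three_lt_one
  exact pow_ne_zero_iff two_ne_zero |>.1 (by rw [aConst_re_sq]; linarith)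

theorem bConst_sq : bConst ^ 2 = I * ((1 + 1 / √3) / 2 : ℝ) := by
  have hexp : exp (I * (5 * π / 4)) ^ 2 = I := by
    rw [← Complex.exp_nat_mul, show ((2 : ℕ) : ℂ) * (I * (5 * π / 4)) = π / 2 * I + 2 * π * I by
      push_cast; ring, exp_periodic, exp_pi_div_two_mul_I]
  rw [bConst, mul_pow, hexp, ← ofReal_pow, Real.sq_sqrt (by positivity)]

theorem normSq_bConst : normSq bConst = (1 + 1 / √3) / 2 := by
  rw [bConst, normSq_mul, normSq_ofReal, Real.mul_self_sqrt (by positivity),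
    show (5 * π / 4 : ℂ) = (5 * π / 4 : ℝ) by push_cast; ring, normSq_eq_norm_sq,
    norm_exp_I_mul_ofReal, one_pow, one_mul]

theorem aConst_re_sq_ne_normSq_bConst : aConst.re ^ 2 ≠ normSq bConst := by
  rw [aConst_re_sq, normSq_bConst]
  have : 0 < 1 / √3 := by positivity
  linarith

theorem im_bConst_sq_ne_zero : (bConst ^ 2).im ≠ 0 := by
  rw [bConst_sq, I_mul_im, ofReal_re]
  positivity

section PsiVec

variable {M : ℕ} [NeZero M] (z : Fin M → ℂ) (m : Fin M)

theorem innM_psiVec_zero : innM z (psiVec 0 m) = aConst.re * z 0 + conj bConst * z m := by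
  simp [psiVec, innM_mul_eVec_add_mul_eVec, conj_aConst]

theorem innM_psiVec_one : innM z (psiVec 1 m) = aConst.re * z m + conj bConst * z 0 := by
  simp [psiVec, innM_mul_eVec_add_mul_eVec, conj_aConst, add_comm]

theorem innM_psiVec_two : innM z (psiVec 2 m) = aConst.re * z 0 - conj bConst * z m := by
  simp [psiVec, sub_eq_add_neg, ← neg_mul, innM_mul_eVec_add_mul_eVec, conj_aConst]

theorem innM_psiVec_three : innM z (psiVec 3 m) = aConst.re * z m - conj bConst * z 0 := by
  simp [psiVec, -neg_mul, innM_mul_eVec_add_mul_eVec, conj_aConst]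
  ring

end PsiVec

theorem normSq_eq_and_conj_mul_eq_of_norm_innM_psiVec {M : ℕ} [NeZero M] {z z' : Fin M → ℂ}
    {m : Fin M}
    (h : ∀ k, ‖innM z (psiVec k m)‖ ^ 2 = ‖innM z' (psiVec k m)‖ ^ 2) :
    normSq (z 0) = normSq (z' 0) ∧ conj (z 0) * z m = conj (z' 0) * z' m := by
  simp only [Complex.sq_norm] at h
  have h₁ := h 0
  have h₂ := h 1
  have h₃ := h 2
  have h₄ := h 3
  rw [innM_psiVec_zero, innM_psiVec_zero] at h₁
  rw [innM_psiVec_one, innM_psiVec_one] at h₂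
  rw [innM_psiVec_two, innM_psiVec_two] at h₃
  rw [innM_psiVec_three, innM_psiVec_three] at h₄
  exact ⟨normSq_eq_of_measurements aConst_re_ne_zero aConst_re_sq_ne_normSq_bConst h₁ h₂ h₃ h₄,
    conj_mul_eq_of_measurements aConst_re_ne_zero im_bConst_sq_ne_zero h₁ h₂ h₃ h₄⟩

theorem stmt9_general (M : ℕ) [NeZero M] (hM : 2 ≤ M) (z z' : Fin M → ℂ)
    (hz : z 0 ≠ 0)
    (h : ∀ m : Fin M, m ≠ 0 → ∀ k : Fin 4,
      ‖innM z (psiVec k m)‖ ^ 2 = ‖innM z' (psiVec k m)‖ ^ 2) :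
    ∃ θ : ℝ, z' = fun i => Complex.exp (Complex.I * θ) * z i := by
  have hmeas := fun m hm => normSq_eq_and_conj_mul_eq_of_norm_innM_psiVec (h m hm)
  have hnorm : normSq (z 0) = normSq (z' 0) :=
    (hmeas ⟨1, hM⟩ (by simp [Fin.ext_iff])).1
  refine exists_phase_of_conj_mul_eq 0 hz fun i => ?_
  by_cases hi : i = 0
  · subst hi
    rw [mul_comm, mul_conj, mul_comm, mul_conj, hnorm]
  · exact (hmeas i hi).2

/-- Uniqueness up to a global phase for the `4M−4` phase-retrieval measurements: if
`z₁ ≠ 0`, `z'₁ ≠ 0`, and `|⟨z, ψ_{k,m}⟩|² = |⟨z', ψ_{k,m}⟩|²` for all `k` and all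
`m ≠ 1`, then `z' = e^{iθ} z` for some real `θ`. -/
theorem stmt9 (M : ℕ) [NeZero M] (hM : 2 ≤ M) (z z' : Fin M → ℂ)
    (hz : z 0 ≠ 0) (hz' : z' 0 ≠ 0)
    (h : ∀ m : Fin M, m ≠ 0 → ∀ k : Fin 4,
      ‖innM z (psiVec k m)‖ ^ 2 = ‖innM z' (psiVec k m)‖ ^ 2) :
    ∃ θ : ℝ, z' = fun i => Complex.exp (Complex.I * θ) * z i :=
  stmt9_general M hM z z' hz h
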